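/- Let U : ℝ³ → M₂(ℂ) take values in SU(2), satisfy the odd (G-parity) reflection symmetry U(r y) = U(y)* for all y ∈ ℝ³, and be differentiable at a point x of the fixed plane P. Then all tangential derivatives of U vanish at x: DU(x)[v] = 0 for every v ∈ ℝ³ with v₃ = 0. -/

import Mathlib

open Matrix

attribute [local instance] Matrix.frobeniusNormedAddCommGroup Matrix.frobeniusNormedSpace

/-- Reflection of `ℝ³` across the plane `{x₃ = 0}`: `(x₁, x₂, x₃) ↦ (x₁, x₂, -x₃)`. -/
def reflPlane : (Fin 3 → ℝ) → (Fin 3 → ℝ) := fun x i => if i = 2 then -x i else x i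

/-!
On the plane `P` the symmetry gives `U = U*`, so `U` is an involution there; differentiating
`U² = 1` along a tangential line shows that `A := DU(x)[v]` anticommutes with `M := U(x)`.
A Hermitian element of `SU(2)` is `±1` (its adjugate, which is its inverse, equals itself),
so `AM + MA = ±2A`, forcing `A = 0`.
-/

attribute [local instance] Matrix.frobeniusNormedRing Matrix.frobeniusNormedAlgebra

theorem reflPlane_eq_self {y : Fin 3 → ℝ} (hy : y 2 = 0) : reflPlane y = y := by
  funext i
  by_cases hi : i = 2 <;> simp [reflPlane, hi, hy]

theorem Matrix.eq_smul_one_of_adjugate_eq_self {K : Type*} [Field K] [NeZero (2 : K)]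
    {M : Matrix (Fin 2) (Fin 2) K} (h : M.adjugate = M) : M = M 0 0 • 1 := by
  have eq_zero_of_neg_eq_self {a : K} (ha : -a = a) : a = 0 :=
    (mul_eq_zero.mp (by linear_combination -ha : (2 : K) * a = 0)).resolve_left two_ne_zero
  rw [adjugate_fin_two] at h
  have h01 : M 0 1 = 0 := eq_zero_of_neg_eq_self (by simpa using congrFun₂ h 0 1)
  have h10 : M 1 0 = 0 := eq_zero_of_neg_eq_self (by simpa using congrFun₂ h 1 0)
  have h11 : M 1 1 = M 0 0 := by simpa using congrFun₂ h 0 0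
  ext i j
  fin_cases i <;> fin_cases j <;> simp [h01, h10, h11]

theorem Matrix.eq_one_or_eq_neg_one_of_mul_self_eq_one {K : Type*} [Field K] [NeZero (2 : K)]
    {M : Matrix (Fin 2) (Fin 2) K} (hsq : M * M = 1) (hdet : M.det = 1) :
    M = 1 ∨ M = -1 := by
  have hadj : M.adjugate = M := by
    calc M.adjugate = M.adjugate * (M * M) := by rw [hsq, mul_one]
      _ = M := by rw [← mul_assoc, adjugate_mul, hdet, one_smul, one_mul]
  have hM := eq_smul_one_of_adjugate_eq_self hadj
  have hc : M 0 0 * M 0 0 = 1 := by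
    have hdet' := congrArg det hM
    rw [hdet, det_smul, det_one, Fintype.card_fin, mul_one] at hdet'
    linear_combination -hdet'
  rcases mul_self_eq_one_iff.mp hc with h | h
  · left; rw [hM, h, one_smul]
  · right; rw [hM, h, neg_one_smul]

theorem eq_zero_of_mul_add_mul_eq_zero_of_eq_one_or_eq_neg_one (K : Type*) {R : Type*} [Field K]
    [NeZero (2 : K)] [Ring R] [Module K R] {a m : R} (hm : m = 1 ∨ m = -1)
    (h : a * m + m * a = 0) : a = 0 := by
  have haa : a + a = 0 := by
    rcases hm with rfl | rfl
    · simpa only [mul_one, one_mul] using h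
    · rwa [mul_neg_one, neg_one_mul, ← neg_add, neg_eq_zero] at h
  rw [← two_smul K a] at haa
  exact (smul_eq_zero.mp haa).resolve_left two_ne_zero

theorem fderiv_apply_mul_add_mul_fderiv_apply_eq_zero {𝕜 E A : Type*} [NontriviallyNormedField 𝕜]
    [NormedAddCommGroup E] [NormedSpace 𝕜 E] [NormedRing A] [NormedAlgebra 𝕜 A]
    {f : E → A} {x v : E} (hf : DifferentiableAt 𝕜 f x)
    (hsq : ∀ t : 𝕜, f (x + t • v) * f (x + t • v) = 1) :
    fderiv 𝕜 f x v * f x + f x * fderiv 𝕜 f x v = 0 := by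
  have hline : HasDerivAt (fun t : 𝕜 => f (x + t • v)) (fderiv 𝕜 f x v) 0 :=
    hf.hasFDerivAt.hasLineDerivAt v
  have hprod := hline.mul hline
  simp only [zero_smul, add_zero] at hprod
  have hone : ((fun t : 𝕜 => f (x + t • v)) * fun t => f (x + t • v)) = fun _ => 1 := funext hsq
  rw [hone] at hprod
  exact hprod.unique (hasDerivAt_const 0 1)

theorem stmt9 (U : (Fin 3 → ℝ) → Matrix (Fin 2) (Fin 2) ℂ)
    (hSU : ∀ y, (U y)ᴴ * U y = 1 ∧ (U y).det = 1)
    (hodd : ∀ y, U (reflPlane y) = (U y)ᴴ)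
    (x : Fin 3 → ℝ) (hx : x 2 = 0) (hU : DifferentiableAt ℝ U x) :
    ∀ v : Fin 3 → ℝ, v 2 = 0 → fderiv ℝ U x v = 0 := by
  intro v hv
  have hherm : ∀ y : Fin 3 → ℝ, y 2 = 0 → (U y)ᴴ = U y := fun y hy => by
    rw [← hodd, reflPlane_eq_self hy]
  have hinv : ∀ y : Fin 3 → ℝ, y 2 = 0 → U y * U y = 1 := fun y hy => by
    simpa only [hherm y hy] using (hSU y).1
  have hM : U x = 1 ∨ U x = -1 :=
    eq_one_or_eq_neg_one_of_mul_self_eq_one (hinv x hx) (hSU x).2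
  have hanti : fderiv ℝ U x v * U x + U x * fderiv ℝ U x v = 0 :=
    fderiv_apply_mul_add_mul_fderiv_apply_eq_zero hU fun t => hinv _ (by simp [hx, hv])
  exact eq_zero_of_mul_add_mul_eq_zero_of_eq_one_or_eq_neg_one ℂ hM hanti
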